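/- Let V be a finite-dimensional real vector space with a nondegenerate symmetric bilinear form B of signature (1, ρ−1). Suppose E₁, ..., E_k ∈ V span a subspace on which B is negative definite, and E ∈ V is such that B(E, E_i) ≥ 0 for all i. Then the intersection of the span of {E, E₁, ..., E_k} with the orthogonal complement {E₁,...,E_k}^⊥ is one-dimensional, and it contains a nonzero vector of the form x·E + Σ x_i·E_i with x > 0 and x_i ≥ 0 for all i. -/

import Mathlib

open Matrix


/-- Construction of the Minkowski basis element: for an exceptional block `E₁,…,E_k`
(negative definite Gram matrix, with entrywise nonpositive inverse) and a vector `E`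
with `B(E,Eᵢ) ≥ 0`, the intersection of the span of `{E,E₁,…,E_k}` with `{E₁,…,E_k}^⊥`
is one-dimensional and contains a vector `x·E + Σ xᵢ·Eᵢ` with `x > 0`, `xᵢ ≥ 0`. -/
theorem stmt10 {V : Type*} [AddCommGroup V] [Module ℝ V] [FiniteDimensional ℝ V]
    (ρ : ℕ) (hρpos : 0 < ρ) (hρ : Module.finrank ℝ V = ρ)
    (B : LinearMap.BilinForm ℝ V)
    (hsymm : ∀ x y, B x y = B y x)
    (hnondeg : B.Nondegenerate)
    (hsig : ∃ bas : Module.Basis (Fin ρ) ℝ V,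
      (∀ i j, i ≠ j → B (bas i) (bas j) = 0) ∧
      0 < B (bas ⟨0, hρpos⟩) (bas ⟨0, hρpos⟩) ∧
      ∀ i, i ≠ (⟨0, hρpos⟩ : Fin ρ) → B (bas i) (bas i) < 0)
    (k : ℕ) (Ei : Fin k → V) (E : V)
    (hneg : ∀ v ∈ Submodule.span ℝ (Set.range Ei), v ≠ 0 → B v v < 0)
    (hGinv : ∀ i j, ((Matrix.of fun i j => B (Ei i) (Ei j))⁻¹) i j ≤ 0)
    (hE : ∀ i, 0 ≤ B E (Ei i))
    (hli : LinearIndependent ℝ (Fin.cons E Ei : Fin (k + 1) → V)) :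
    Module.finrank ℝ
        ↥(Submodule.span ℝ (Set.range (Fin.cons E Ei : Fin (k + 1) → V)) ⊓
          B.orthogonal (Submodule.span ℝ (Set.range Ei))) = 1 ∧
      ∃ (x : ℝ) (xi : Fin k → ℝ), 0 < x ∧ (∀ i, 0 ≤ xi i) ∧
        (x • E + ∑ i, xi i • Ei i) ∈
          Submodule.span ℝ (Set.range (Fin.cons E Ei : Fin (k + 1) → V)) ⊓
            B.orthogonal (Submodule.span ℝ (Set.range Ei)) := by
  classical
  set G : Matrix (Fin k) (Fin k) ℝ := Matrix.of fun i j => B (Ei i) (Ei j) with hG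
  have hEi_li : LinearIndependent ℝ Ei := by
    have h := hli.comp Fin.succ (Fin.succ_injective k)
    have : (Fin.cons E Ei : Fin (k+1) → V) ∘ Fin.succ = Ei := by
      funext i; simp [Function.comp]
    rwa [this] at h
  -- members of the span of Ei
  have hmemEi : ∀ x : Fin k → ℝ, (∑ i, x i • Ei i) ∈ Submodule.span ℝ (Set.range Ei) :=
    fun x => Submodule.sum_mem _ fun i _ =>
      Submodule.smul_mem _ _ (Submodule.subset_span ⟨i, rfl⟩)
  have hBvv : ∀ x : Fin k → ℝ, B (∑ i, x i • Ei i) (∑ j, x j • Ei j)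
      = ∑ i, x i * (G *ᵥ x) i := by
    intro x
    simp only [map_sum, _root_.map_smul, LinearMap.smul_apply, LinearMap.sum_apply, smul_eq_mul,
      Matrix.mulVec, dotProduct, hG, Matrix.of_apply, Finset.mul_sum]
    refine Finset.sum_congr rfl fun i _ => Finset.sum_congr rfl fun j _ => by
      rw [hsymm (Ei j) (Ei i)]; ring
  have hdet : G.det ≠ 0 := by
    intro h
    obtain ⟨x, hx0, hx⟩ := (Matrix.exists_mulVec_eq_zero_iff).2 h
    have hv : (∑ i, x i • Ei i) ≠ 0 := by
      intro h0
      exact hx0 (funext fun i => (Fintype.linearIndependent_iff.1 hEi_li) x h0 i)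
    have hlt := hneg _ (hmemEi x) hv
    rw [hBvv, hx] at hlt
    simp at hlt
  set c : Fin k → ℝ := fun j => B E (Ei j) with hc
  set xi : Fin k → ℝ := fun i => -(G⁻¹ *ᵥ c) i with hxidef
  have hxi : ∀ i, 0 ≤ xi i := by
    intro i
    simp only [hxidef, Matrix.mulVec, dotProduct, neg_nonneg]
    exact Finset.sum_nonpos fun j _ => mul_nonpos_of_nonpos_of_nonneg (hGinv i j) (hE j)
  set D : V := E + ∑ i, xi i • Ei i with hDdef
  have hGsymm : Gᵀ = G := by
    ext i j; simp [hG, hsymm (Ei j) (Ei i)]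
  have hD_orth : ∀ j, B D (Ei j) = 0 := by
    intro j
    have h1 : B D (Ei j) = c j + ∑ i, xi i * G i j := by
      simp only [hDdef, map_add, LinearMap.add_apply, map_sum, LinearMap.sum_apply,
        _root_.map_smul, LinearMap.smul_apply, smul_eq_mul, hG, Matrix.of_apply, hc]
    have h2 : ∑ i, xi i * G i j = -(c j) := by
      have hGc : G *ᵥ (G⁻¹ *ᵥ c) = c := by
        rw [Matrix.mulVec_mulVec, Matrix.mul_nonsing_inv _ (isUnit_iff_ne_zero.2 hdet),
          Matrix.one_mulVec]
      have : ∑ i, xi i * G i j = -(((G⁻¹ *ᵥ c) ᵥ* G) j) := by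
        simp only [Matrix.vecMul, dotProduct, hxidef, ← Finset.sum_neg_distrib]
        exact Finset.sum_congr rfl fun i _ => by ring
      rw [this, ← Matrix.mulVec_transpose, hGsymm, hGc]
    rw [h1, h2]; ring
  -- D lies in the intersection
  have hDspan : D ∈ Submodule.span ℝ (Set.range (Fin.cons E Ei : Fin (k + 1) → V)) := by
    refine Submodule.add_mem _ (Submodule.subset_span ⟨0, by simp⟩) ?_
    exact Submodule.sum_mem _ fun i _ =>
      Submodule.smul_mem _ _ (Submodule.subset_span ⟨i.succ, by simp⟩)
  have hDorth : D ∈ B.orthogonal (Submodule.span ℝ (Set.range Ei)) := by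
    rw [LinearMap.BilinForm.mem_orthogonal_iff]
    intro n hn
    induction hn using Submodule.span_induction with
    | mem y hy =>
        obtain ⟨i, rfl⟩ := hy
        exact (hsymm (Ei i) D).trans (hD_orth i)
    | zero => simp [LinearMap.BilinForm.IsOrtho]
    | add y z hy hz hy' hz' =>
        simp only [LinearMap.BilinForm.IsOrtho, map_add, LinearMap.add_apply] at *
        rw [hy', hz']; ring
    | smul a y hy hy' =>
        simp only [LinearMap.BilinForm.IsOrtho, _root_.map_smul, LinearMap.smul_apply,
          smul_eq_mul] at *
        rw [hy']; ring
  have hD0 : D ≠ 0 := by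
    intro h0
    have hsum : ∑ i, (Fin.cons 1 xi : Fin (k+1) → ℝ) i • (Fin.cons E Ei : Fin (k+1) → V) i
        = D := by
      rw [Fin.sum_univ_succ]
      simp [hDdef]
    have := (Fintype.linearIndependent_iff.1 hli) (Fin.cons 1 xi) (by rw [hsum, h0]) 0
    simp at this
  set W := Submodule.span ℝ (Set.range (Fin.cons E Ei : Fin (k + 1) → V)) ⊓
      B.orthogonal (Submodule.span ℝ (Set.range Ei)) with hW
  have hDW : D ∈ W := ⟨hDspan, hDorth⟩
  -- W is contained in the line spanned by D
  have hWle : W ≤ ℝ ∙ D := by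
    intro v hv
    obtain ⟨hv1, hv2⟩ := hv
    have hv1' : v ∈ (ℝ ∙ E) ⊔ Submodule.span ℝ (Set.range Ei) := by
      have : Set.range (Fin.cons E Ei : Fin (k + 1) → V) = {E} ∪ Set.range Ei := by
        ext y; constructor
        · rintro ⟨i, rfl⟩
          refine Fin.cases ?_ ?_ i
          · left; simp
          · intro j; right; exact ⟨j, by simp⟩
        · rintro (rfl | ⟨j, rfl⟩)
          exacts [⟨0, by simp⟩, ⟨j.succ, by simp⟩]
      rw [this, Submodule.span_union] at hv1
      exact hv1
    obtain ⟨p, hp, w, hw, rfl⟩ := Submodule.mem_sup.1 hv1'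
    obtain ⟨a, rfl⟩ := Submodule.mem_span_singleton.1 hp
    -- u := v - a • D ∈ span Ei ∩ orthogonal, hence B u u = 0, hence u = 0
    have hu_span : a • E + w - a • D ∈ Submodule.span ℝ (Set.range Ei) := by
      have : a • E + w - a • D = w - a • ∑ i, xi i • Ei i := by
        rw [hDdef]; module
      rw [this]
      exact Submodule.sub_mem _ hw (Submodule.smul_mem _ _ (hmemEi xi))
    have hu_orth : a • E + w - a • D ∈ B.orthogonal (Submodule.span ℝ (Set.range Ei)) :=
      Submodule.sub_mem _ hv2 (Submodule.smul_mem _ _ hDorth)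
    have huu : B (a • E + w - a • D) (a • E + w - a • D) = 0 :=
      (LinearMap.BilinForm.mem_orthogonal_iff.1 hu_orth) _ hu_span
    have hu0 : a • E + w - a • D = 0 := by
      by_contra hne
      exact absurd huu (ne_of_lt (hneg _ hu_span hne))
    have : a • E + w = a • D := by
      have := sub_eq_zero.1 hu0; exact this
    rw [this]
    exact Submodule.smul_mem _ _ (Submodule.mem_span_singleton_self D)
  have hle1 : Module.finrank ℝ W ≤ 1 := by
    calc Module.finrank ℝ W ≤ Module.finrank ℝ (ℝ ∙ D) := Submodule.finrank_mono hWle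
    _ = 1 := finrank_span_singleton hD0
  have hge1 : 1 ≤ Module.finrank ℝ W := by
    calc 1 = Module.finrank ℝ (ℝ ∙ D) := (finrank_span_singleton hD0).symm
    _ ≤ Module.finrank ℝ W :=
      Submodule.finrank_mono ((Submodule.span_singleton_le_iff_mem D W).2 hDW)
  refine ⟨le_antisymm hle1 hge1, 1, xi, one_pos, hxi, ?_⟩
  simpa [hDdef] using hDW
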